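/- arXiv:1103.0570 — 2 statements merged into one kernel-verified Lean document; each statement's English description precedes it below -/
import Mathlib

section
/- Let M : ℤ^ν → ℤ^ν be a symmetric integer matrix such that the kernel of M is generated by a single vector with all entries positive (e.g. the intersection matrix of a connected special fiber). Then the pairing ⟨,⟩_M : Φ_M × Φ_M → ℚ/ℤ on the torsion part Φ_M of coker(M) is perfect, i.e., the induced map Φ_M → Hom(Φ_M, ℚ/ℤ) is an isomorphism. -/
open Matrix

/-- The group `ℚ/ℤ`. -/
abbrev QZ : Type := ℚ ⧸ AddSubgroup.zmultiples (1 : ℚ)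

/-- The cokernel of `M : ℤ^ν → ℤ^ν`. -/
abbrev MatCoker {ν : ℕ} (M : Matrix (Fin ν) (Fin ν) ℤ) : Type :=
  (Fin ν → ℤ) ⧸ LinearMap.range M.mulVecLin

/-- `Φ_M`, the torsion subgroup of the cokernel of `M : ℤ^ν → ℤ^ν`. -/
abbrev PhiM {ν : ℕ} (M : Matrix (Fin ν) (Fin ν) ℤ) : Type :=
  Submodule.torsion ℤ (MatCoker M)

/-!
A class of `Φ_M` is `[T]` with `T = M q` for some `q ∈ ℚ^ν`, and the pairing is
`⟨[M q], [T']⟩ = q ⬝ T' mod ℤ`; symmetry of `M` makes this independent of all choices.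
Over `ℚ` the symmetric matrix `M` with kernel `ℚ v` has image `v^⊥`, so every integral `Y ⊥ v`
gives a class of `Φ_M`. Hence if `⟨[M q], ·⟩ = 0` then `q ⬝ Y ∈ ℤ` for all integral `Y ⊥ v`, which
forces `q ∈ ℤ^ν + ℚ v` and `M q ∈ M ℤ^ν`: the pairing is nondegenerate. Conversely a character
of `Φ_M`, pulled back to the preimage of `Φ_M` in `ℤ^ν` and extended to `ℤ^ν` by injectivity of
`ℚ/ℤ`, is `X ↦ u ⬝ X mod ℤ` for some `u ∈ ℚ^ν`; it kills `M ℤ^ν`, so `M u` is integral and the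
character is `⟨[M u], ·⟩`.
-/

section Lattice

variable {ι : Type*} [Fintype ι]

theorem exists_int_smul_eq_intCast_comp (q : ι → ℚ) :
    ∃ m : ℤ, m ≠ 0 ∧ ∃ S : ι → ℤ, (m : ℚ) • q = Int.cast ∘ S := by
  obtain ⟨⟨m, hm⟩, hint⟩ :=
    IsLocalization.exist_integer_multiples_of_finite (nonZeroDivisors ℤ) q
  choose S hS using hint
  exact ⟨m, nonZeroDivisors.ne_zero hm, S, funext fun i => by simpa using (hS i).symm⟩

theorem QZ.mk_eq_zero_iff (r : ℚ) :
    (QuotientAddGroup.mk r : QZ) = 0 ↔ ∃ k : ℤ, (k : ℚ) = r := by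
  simp [QuotientAddGroup.eq_zero_iff, AddSubgroup.mem_zmultiples_iff]

theorem QZ.exists_eq_mk_dotProduct [DecidableEq ι] (h : (ι → ℤ) →+ QZ) :
    ∃ u : ι → ℚ, ∀ X : ι → ℤ, h X = QuotientAddGroup.mk (u ⬝ᵥ Int.cast ∘ X) := by
  choose u hu using fun i => QuotientAddGroup.mk_surjective (h (Pi.single i 1))
  refine ⟨u, fun X => ?_⟩
  conv_lhs => rw [pi_eq_sum_univ' X]
  simp only [map_sum, map_zsmul, dotProduct, Function.comp_apply, QuotientAddGroup.mk_sum]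
  refine Finset.sum_congr rfl fun i _ => ?_
  rw [← hu, ← QuotientAddGroup.mk_zsmul, zsmul_eq_mul, mul_comm]

theorem exists_eq_intCast_add_smul_of_forall_dotProduct [DecidableEq ι] (v : ι → ℤ)
    (q : ι → ℚ) (h : ∀ Y : ι → ℤ, v ⬝ᵥ Y = 0 → ∃ k : ℤ, (k : ℚ) = q ⬝ᵥ Int.cast ∘ Y) :
    ∃ (U : ι → ℤ) (c : ℚ), q = Int.cast ∘ U + c • Int.cast ∘ v := by
  obtain ⟨w, hw⟩ := Finset.univ.gcd_eq_sum_mul v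
  set d := Finset.univ.gcd v
  -- if `d = 0` then `v = 0`, and integer division by zero makes `c = 0` as well
  set c : ι → ℤ := fun i => v i / d
  have hvc (i : ι) : v i = d * c i :=
    (Int.mul_ediv_cancel' (Finset.gcd_dvd (Finset.mem_univ i))).symm
  have hU (i : ι) : ∃ k : ℤ, (k : ℚ) = q i - c i * (q ⬝ᵥ Int.cast ∘ w) := by
    obtain ⟨k, hk⟩ := h (Pi.single i 1 - c i • w) (by
      rw [dotProduct_sub, dotProduct_smul, dotProduct_single, smul_eq_mul, mul_one, dotProduct,
        ← hw, hvc i, mul_comm, sub_self])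
    refine ⟨k, hk.trans ?_⟩
    simp [dotProduct, mul_sub, Finset.sum_sub_distrib, Pi.single_apply, Finset.mul_sum,
      mul_left_comm]
  choose U hU using hU
  refine ⟨U, (q ⬝ᵥ Int.cast ∘ w) / d, funext fun i => ?_⟩
  simp only [Pi.add_apply, Function.comp_apply, Pi.smul_apply, smul_eq_mul, hU, hvc i]
  rcases eq_or_ne d 0 with hd | hd
  · simp [c, hd]
  · push_cast
    field_simp
    ring

end Lattice

section Matrix

variable {ι : Type*} [Fintype ι]

theorem Matrix.IsSymm.dotProduct_mulVec_comm {R : Type*} [CommSemiring R] {A : Matrix ι ι R}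
    (hA : A.IsSymm) (x y : ι → R) : x ⬝ᵥ A *ᵥ y = y ⬝ᵥ A *ᵥ x := by
  rw [dotProduct_mulVec, ← mulVec_transpose, hA.eq, dotProduct_comm]

theorem Matrix.IsSymm.range_mulVecLin_eq_ker_dotProduct {K : Type*} [Field K] [DecidableEq ι]
    {A : Matrix ι ι K} (hA : A.IsSymm) {w : ι → K}
    (hker : LinearMap.ker A.mulVecLin = K ∙ w) :
    LinearMap.range A.mulVecLin = LinearMap.ker (dotProductEquiv K ι w) := by
  have hAw : A *ᵥ w = 0 := by
    simpa using (hker.ge (Submodule.mem_span_singleton_self w) : w ∈ LinearMap.ker A.mulVecLin)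
  have hle : LinearMap.range A.mulVecLin ≤ LinearMap.ker (dotProductEquiv K ι w) := by
    rintro _ ⟨x, rfl⟩
    simp [hA.dotProduct_mulVec_comm, hAw]
  rcases eq_or_ne w 0 with rfl | hw
  · have : Function.Surjective A.mulVecLin :=
      LinearMap.injective_iff_surjective.mp (LinearMap.ker_eq_bot.mp (by simpa using hker))
    simp [LinearMap.range_eq_top.mpr this]
  · refine Submodule.eq_of_le_of_finrank_eq hle ?_
    have h1 := LinearMap.finrank_range_add_finrank_ker A.mulVecLin
    have h2 := (dotProductEquiv K ι w).finrank_ker_add_one_of_ne_zero (by simpa using hw)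
    rw [hker, finrank_span_singleton hw] at h1
    omega

theorem Matrix.map_intCast_mulVec (M : Matrix ι ι ℤ) (S : ι → ℤ) :
    M.map Int.cast *ᵥ (Int.cast ∘ S : ι → ℚ) = Int.cast ∘ (M *ᵥ S) :=
  funext fun i => (RingHom.map_mulVec (Int.castRingHom ℚ) M S i).symm

theorem Matrix.map_intCast_mulVec_inv_smul {M : Matrix ι ι ℤ} {S T : ι → ℤ} {n : ℤ}
    (hn : n ≠ 0) (hS : M *ᵥ S = n • T) :
    M.map Int.cast *ᵥ ((n : ℚ)⁻¹ • (Int.cast ∘ S : ι → ℚ)) = Int.cast ∘ T := by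
  rw [mulVec_smul, map_intCast_mulVec, hS]
  ext i
  simp [hn]

theorem Matrix.mulVec_eq_smul_of_map_intCast {M : Matrix ι ι ℤ} {q : ι → ℚ} {S T : ι → ℤ}
    {m : ℤ} (hS : (m : ℚ) • q = Int.cast ∘ S) (hq : M.map Int.cast *ᵥ q = Int.cast ∘ T) :
    M *ᵥ S = m • T := by
  have : (Int.cast ∘ (M *ᵥ S) : ι → ℚ) = Int.cast ∘ (m • T) := by
    rw [← map_intCast_mulVec, ← hS, mulVec_smul, hq]
    ext
    simp
  exact (Int.cast_injective (α := ℚ)).comp_left this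

theorem Matrix.ker_mulVecLin_map_intCast {M : Matrix ι ι ℤ} {v : ι → ℤ}
    (hker : LinearMap.ker M.mulVecLin = ℤ ∙ v) :
    LinearMap.ker (M.map Int.cast : Matrix ι ι ℚ).mulVecLin = ℚ ∙ (Int.cast ∘ v) := by
  apply le_antisymm
  · intro q hq
    rw [LinearMap.mem_ker, mulVecLin_apply] at hq
    obtain ⟨m, hm, S, hS⟩ := exists_int_smul_eq_intCast_comp q
    have hMS : M *ᵥ S = 0 := by
      simpa using mulVec_eq_smul_of_map_intCast (T := 0) hS (by simpa using hq)
    obtain ⟨c, rfl⟩ := Submodule.mem_span_singleton.mp (hker.le hMS)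
    have hmq : (m : ℚ) • q = (c : ℚ) • (Int.cast ∘ v) := by
      rw [hS]; ext i; simp
    refine Submodule.mem_span_singleton.mpr ⟨c / m, ?_⟩
    rw [div_eq_inv_mul, mul_smul, ← hmq, smul_smul, inv_mul_cancel₀ (by exact_mod_cast hm),
      one_smul]
  · have hMv : M *ᵥ v = 0 := by
      simpa using (hker.ge (Submodule.mem_span_singleton_self v) : v ∈ LinearMap.ker M.mulVecLin)
    simp [Submodule.span_le, map_intCast_mulVec, hMv]

end Matrix

section Pairing

variable {ν : ℕ} {M : Matrix (Fin ν) (Fin ν) ℤ}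

theorem mk_mem_torsion_iff (T : Fin ν → ℤ) :
    (Submodule.Quotient.mk T : MatCoker M) ∈ Submodule.torsion ℤ (MatCoker M) ↔
      ∃ q : Fin ν → ℚ, M.map Int.cast *ᵥ q = Int.cast ∘ T := by
  constructor
  · rintro ⟨⟨a, ha⟩, h⟩
    rw [Submonoid.smul_def, ← Submodule.Quotient.mk_smul, Submodule.Quotient.mk_eq_zero] at h
    obtain ⟨S, hS⟩ := h
    exact ⟨_, map_intCast_mulVec_inv_smul (nonZeroDivisors.ne_zero ha) hS⟩
  · rintro ⟨q, hq⟩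
    obtain ⟨m, hm, S, hS⟩ := exists_int_smul_eq_intCast_comp q
    refine ⟨⟨m, mem_nonZeroDivisors_of_ne_zero hm⟩, ?_⟩
    rw [Submonoid.smul_def, ← Submodule.Quotient.mk_smul, Submodule.Quotient.mk_eq_zero]
    exact ⟨S, mulVec_eq_smul_of_map_intCast hS hq⟩

theorem mk_mem_torsion_of_dotProduct_eq_zero (hM : M.IsSymm) {v : Fin ν → ℤ}
    (hker : LinearMap.ker M.mulVecLin = ℤ ∙ v) {Y : Fin ν → ℤ} (hY : v ⬝ᵥ Y = 0) :
    (Submodule.Quotient.mk Y : MatCoker M) ∈ Submodule.torsion ℤ (MatCoker M) := by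
  have hrange :=
    (hM.map Int.cast).range_mulVecLin_eq_ker_dotProduct (ker_mulVecLin_map_intCast hker)
  obtain ⟨q, hq⟩ : (Int.cast ∘ Y : Fin ν → ℚ) ∈ LinearMap.range (M.map Int.cast).mulVecLin := by
    rw [hrange, LinearMap.mem_ker]
    simpa [dotProduct] using congrArg (Int.cast : ℤ → ℚ) hY
  exact (mk_mem_torsion_iff Y).mpr ⟨q, hq⟩

theorem PhiM.exists_lift (x : PhiM M) : ∃ (T : Fin ν → ℤ) (q : Fin ν → ℚ),
    (x : MatCoker M) = Submodule.Quotient.mk T ∧ M.map Int.cast *ᵥ q = Int.cast ∘ T := by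
  obtain ⟨T, hT⟩ := Submodule.Quotient.mk_surjective _ (x : MatCoker M)
  obtain ⟨q, hq⟩ := (mk_mem_torsion_iff T).mp (hT ▸ x.2)
  exact ⟨T, q, hT.symm, hq⟩

theorem dotProduct_intCast_comm (hM : M.IsSymm) {q q' : Fin ν → ℚ} {T T' : Fin ν → ℤ}
    (hq : M.map Int.cast *ᵥ q = Int.cast ∘ T) (hq' : M.map Int.cast *ᵥ q' = Int.cast ∘ T') :
    q ⬝ᵥ Int.cast ∘ T' = q' ⬝ᵥ Int.cast ∘ T := by
  rw [← hq, ← hq', (hM.map Int.cast).dotProduct_mulVec_comm]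

theorem mk_dotProduct_eq_of_sub_mem_range (hM : M.IsSymm) {q : Fin ν → ℚ} {T R R' : Fin ν → ℤ}
    (hq : M.map Int.cast *ᵥ q = Int.cast ∘ T) (hR : R - R' ∈ LinearMap.range M.mulVecLin) :
    (QuotientAddGroup.mk (q ⬝ᵥ Int.cast ∘ R) : QZ) = QuotientAddGroup.mk (q ⬝ᵥ Int.cast ∘ R') := by
  obtain ⟨U, hU⟩ := hR
  have hRU : Int.cast ∘ R - Int.cast ∘ R' = (Int.cast ∘ (M *ᵥ U) : Fin ν → ℚ) := by
    ext i; simp [← mulVecLin_apply, hU]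
  rw [QuotientAddGroup.eq_iff_sub_mem, ← dotProduct_sub, hRU,
    dotProduct_intCast_comm hM hq (map_intCast_mulVec M U)]
  exact ⟨U ⬝ᵥ T, by simp [dotProduct]⟩

theorem mk_dotProduct_eq_of_mk_eq (hM : M.IsSymm) {q₁ q₂ : Fin ν → ℚ} {T₁ T₂ R₁ R₂ : Fin ν → ℤ}
    (hq₁ : M.map Int.cast *ᵥ q₁ = Int.cast ∘ T₁) (hq₂ : M.map Int.cast *ᵥ q₂ = Int.cast ∘ T₂)
    (hT : (Submodule.Quotient.mk T₁ : MatCoker M) = Submodule.Quotient.mk T₂)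
    (hR : (Submodule.Quotient.mk R₁ : MatCoker M) = Submodule.Quotient.mk R₂)
    (hR₂ : (Submodule.Quotient.mk R₂ : MatCoker M) ∈ Submodule.torsion ℤ (MatCoker M)) :
    (QuotientAddGroup.mk (q₁ ⬝ᵥ Int.cast ∘ R₁) : QZ) =
      QuotientAddGroup.mk (q₂ ⬝ᵥ Int.cast ∘ R₂) := by
  obtain ⟨r, hr⟩ := (mk_mem_torsion_iff R₂).mp hR₂
  calc (QuotientAddGroup.mk (q₁ ⬝ᵥ Int.cast ∘ R₁) : QZ)
      = QuotientAddGroup.mk (q₁ ⬝ᵥ Int.cast ∘ R₂) :=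
        mk_dotProduct_eq_of_sub_mem_range hM hq₁ ((Submodule.Quotient.eq _).mp hR)
    _ = QuotientAddGroup.mk (r ⬝ᵥ Int.cast ∘ T₁) := by rw [dotProduct_intCast_comm hM hq₁ hr]
    _ = QuotientAddGroup.mk (r ⬝ᵥ Int.cast ∘ T₂) :=
        mk_dotProduct_eq_of_sub_mem_range hM hr ((Submodule.Quotient.eq _).mp hT)
    _ = QuotientAddGroup.mk (q₂ ⬝ᵥ Int.cast ∘ R₂) := by rw [dotProduct_intCast_comm hM hq₂ hr]

noncomputable def torsionPairingFun (M : Matrix (Fin ν) (Fin ν) ℤ) (x y : PhiM M) : QZ :=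
  QuotientAddGroup.mk
    ((PhiM.exists_lift x).choose_spec.choose ⬝ᵥ Int.cast ∘ (PhiM.exists_lift y).choose)

theorem torsionPairingFun_eq (hM : M.IsSymm) {x y : PhiM M} {T T' : Fin ν → ℤ}
    {q : Fin ν → ℚ} (hx : (x : MatCoker M) = Submodule.Quotient.mk T)
    (hy : (y : MatCoker M) = Submodule.Quotient.mk T')
    (hq : M.map Int.cast *ᵥ q = Int.cast ∘ T) :
    torsionPairingFun M x y = QuotientAddGroup.mk (q ⬝ᵥ Int.cast ∘ T') := by
  obtain ⟨hTx, hqx⟩ := (PhiM.exists_lift x).choose_spec.choose_spec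
  obtain ⟨hTy, -⟩ := (PhiM.exists_lift y).choose_spec.choose_spec
  exact mk_dotProduct_eq_of_mk_eq hM hqx hq (hTx.symm.trans hx) (hTy.symm.trans hy) (hy ▸ y.2)

noncomputable def torsionPairing (hM : M.IsSymm) : PhiM M →+ PhiM M →+ QZ :=
  AddMonoidHom.mk'
    (fun x => AddMonoidHom.mk' (torsionPairingFun M x) fun y z => by
      obtain ⟨T, q, hxT, hq⟩ := PhiM.exists_lift x
      obtain ⟨T₁, -, hyT, -⟩ := PhiM.exists_lift y
      obtain ⟨T₂, -, hzT, -⟩ := PhiM.exists_lift z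
      have hyz : ((y + z : PhiM M) : MatCoker M) = Submodule.Quotient.mk (T₁ + T₂) := by
        simp [hyT, hzT]
      rw [torsionPairingFun_eq hM hxT hyz hq, torsionPairingFun_eq hM hxT hyT hq,
        torsionPairingFun_eq hM hxT hzT hq, ← QuotientAddGroup.mk_add, ← dotProduct_add]
      congr 2
      ext
      simp)
    fun x y => by
      ext z
      obtain ⟨T₁, q₁, hxT, hq₁⟩ := PhiM.exists_lift x
      obtain ⟨T₂, q₂, hyT, hq₂⟩ := PhiM.exists_lift y
      obtain ⟨T, -, hzT, -⟩ := PhiM.exists_lift z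
      have hxy : ((x + y : PhiM M) : MatCoker M) = Submodule.Quotient.mk (T₁ + T₂) := by
        simp [hxT, hyT]
      have hq : M.map Int.cast *ᵥ (q₁ + q₂) = Int.cast ∘ (T₁ + T₂) := by
        rw [mulVec_add, hq₁, hq₂]
        ext
        simp
      simp only [AddMonoidHom.mk'_apply, AddMonoidHom.add_apply]
      rw [torsionPairingFun_eq hM hxy hzT hq, torsionPairingFun_eq hM hxT hzT hq₁,
        torsionPairingFun_eq hM hyT hzT hq₂, ← QuotientAddGroup.mk_add, add_dotProduct]

theorem torsionPairing_apply (hM : M.IsSymm) {x y : PhiM M} {T T' : Fin ν → ℤ} {q : Fin ν → ℚ}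
    (hx : (x : MatCoker M) = Submodule.Quotient.mk T)
    (hy : (y : MatCoker M) = Submodule.Quotient.mk T')
    (hq : M.map Int.cast *ᵥ q = Int.cast ∘ T) :
    torsionPairing hM x y = QuotientAddGroup.mk (q ⬝ᵥ Int.cast ∘ T') :=
  torsionPairingFun_eq hM hx hy hq

theorem torsionPairing_apply_eq_div (hM : M.IsSymm) {x y : PhiM M} {T T' S S' : Fin ν → ℤ}
    {n n' : ℤ} (hx : (x : MatCoker M) = Submodule.Quotient.mk T)
    (hy : (y : MatCoker M) = Submodule.Quotient.mk T') (hn : n ≠ 0) (hn' : n' ≠ 0)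
    (hS : M *ᵥ S = n • T) (hS' : M *ᵥ S' = n' • T') :
    torsionPairing hM x y = QuotientAddGroup.mk (((S ⬝ᵥ M *ᵥ S' : ℤ) : ℚ) / (n * n')) := by
  rw [torsionPairing_apply hM hx hy (map_intCast_mulVec_inv_smul hn hS), hS']
  congr 1
  have hST : ((S ⬝ᵥ T' : ℤ) : ℚ) = Int.cast ∘ S ⬝ᵥ Int.cast ∘ T' :=
    (Int.castRingHom ℚ).map_dotProduct S T'
  rw [dotProduct_smul, smul_eq_mul, Int.cast_mul, hST, smul_dotProduct, smul_eq_mul]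
  field_simp

theorem torsionPairing_injective (hM : M.IsSymm) {v : Fin ν → ℤ}
    (hker : LinearMap.ker M.mulVecLin = ℤ ∙ v) : Function.Injective (torsionPairing hM) := by
  rw [injective_iff_map_eq_zero]
  intro x hx
  obtain ⟨T, q, hxT, hq⟩ := PhiM.exists_lift x
  have hint (Y : Fin ν → ℤ) (hY : v ⬝ᵥ Y = 0) : ∃ k : ℤ, (k : ℚ) = q ⬝ᵥ Int.cast ∘ Y := by
    rw [← QZ.mk_eq_zero_iff, ← torsionPairing_apply hM hxT
      (y := ⟨_, mk_mem_torsion_of_dotProduct_eq_zero hM hker hY⟩) rfl hq, hx]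
    rfl
  obtain ⟨U, c, rfl⟩ := exists_eq_intCast_add_smul_of_forall_dotProduct v q hint
  have hcv : M.map Int.cast *ᵥ (c • Int.cast ∘ v) = (0 : Fin ν → ℚ) :=
    (ker_mulVecLin_map_intCast hker).ge
      (Submodule.smul_mem _ c (Submodule.mem_span_singleton_self _))
  rw [mulVec_add, hcv, add_zero, map_intCast_mulVec,
    (Int.cast_injective (α := ℚ)).comp_left.eq_iff] at hq
  refine Subtype.ext ?_
  change (x : MatCoker M) = 0
  rw [hxT, Submodule.Quotient.mk_eq_zero]
  exact ⟨U, hq⟩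

theorem torsionPairing_surjective (hM : M.IsSymm) : Function.Surjective (torsionPairing hM) := by
  intro χ
  let P := (Submodule.torsion ℤ (MatCoker M)).comap (LinearMap.range M.mulVecLin).mkQ
  obtain ⟨h, hh⟩ := (Module.Baer.of_divisible QZ).extension_property_addMonoidHom
    P.subtype.toAddMonoidHom Subtype.val_injective
    (χ.comp ((LinearMap.range M.mulVecLin).mkQ.submoduleComap _).toAddMonoidHom)
  have hhP (Y : Fin ν → ℤ) (hY : Y ∈ P) : h Y = χ ⟨_, hY⟩ := DFunLike.congr_fun hh ⟨Y, hY⟩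
  obtain ⟨u, hu⟩ := QZ.exists_eq_mk_dotProduct h
  have hMu (j : Fin ν) : ∃ k : ℤ, (k : ℚ) = (M.map Int.cast *ᵥ u) j := by
    have hMj0 : (LinearMap.range M.mulVecLin).mkQ (M *ᵥ Pi.single j 1) = 0 :=
      (Submodule.Quotient.mk_eq_zero _).mpr ⟨_, rfl⟩
    have hMj : M *ᵥ Pi.single j 1 ∈ P := Submodule.mem_comap.mpr (hMj0 ▸ zero_mem _)
    have h0 : h (M *ᵥ Pi.single j 1) = 0 := by
      rw [hhP _ hMj, ← map_zero χ]
      exact congrArg χ (Subtype.ext hMj0)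
    rw [hu, QZ.mk_eq_zero_iff, ← map_intCast_mulVec,
      (hM.map Int.cast).dotProduct_mulVec_comm] at h0
    have hej : (Int.cast ∘ Pi.single j 1 : Fin ν → ℚ) = Pi.single j 1 := by
      ext i
      simp [Pi.single_apply]
    simpa [hej] using h0
  choose T₀ hT₀ using hMu
  have hq : M.map Int.cast *ᵥ u = Int.cast ∘ T₀ := (funext hT₀).symm
  refine ⟨⟨_, (mk_mem_torsion_iff T₀).mpr ⟨u, hq⟩⟩, AddMonoidHom.ext fun y => ?_⟩
  obtain ⟨T, -, hyT, -⟩ := PhiM.exists_lift y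
  have hTP : T ∈ P := by
    change (Submodule.Quotient.mk T : MatCoker M) ∈ Submodule.torsion ℤ (MatCoker M)
    exact hyT ▸ y.2
  rw [torsionPairing_apply hM rfl hyT hq, ← hu, hhP T hTP]
  exact congrArg χ (Subtype.ext hyT.symm)

end Pairing

theorem stmt6_general (ν : ℕ) (M : Matrix (Fin ν) (Fin ν) ℤ) (hM : M.IsSymm)
    (v : Fin ν → ℤ)
    (hker : LinearMap.ker M.mulVecLin = Submodule.span ℤ {v}) :
    ∃ β : PhiM M →+ PhiM M →+ QZ,
      (∀ (x y : PhiM M) (T T' : Fin ν → ℤ),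
        (x : MatCoker M) = Submodule.Quotient.mk T →
        (y : MatCoker M) = Submodule.Quotient.mk T' →
        ∀ (n n' : ℤ) (S S' : Fin ν → ℤ), n ≠ 0 → n' ≠ 0 →
          M.mulVec S = n • T → M.mulVec S' = n' • T' →
          β x y = QuotientAddGroup.mk
            (((S ⬝ᵥ M.mulVec S' : ℤ) : ℚ) / ((n : ℚ) * (n' : ℚ)))) ∧
      Function.Bijective β :=
  ⟨torsionPairing hM,
    fun _ _ _ _ hx hy _ _ _ _ hn hn' hS hS' => torsionPairing_apply_eq_div hM hx hy hn hn' hS hS',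
    torsionPairing_injective hM hker, torsionPairing_surjective hM⟩

/-- Bosch–Lorenzini, Theorem 1.3: let `M : ℤ^ν → ℤ^ν` be a
symmetric integer matrix whose kernel is generated by a single vector with all
entries positive (e.g. the intersection matrix of a connected special fiber).
Then the pairing `⟨,⟩_M : Φ_M × Φ_M → ℚ/ℤ`, `⟨T̄,T̄'⟩_M = (ᵗS/n)M(S'/n') mod ℤ`
with `MS = nT`, `MS' = n'T'`, is perfect: the induced map
`Φ_M → Hom(Φ_M, ℚ/ℤ)` is an isomorphism. -/
theorem stmt6 (ν : ℕ) (M : Matrix (Fin ν) (Fin ν) ℤ) (hM : M.IsSymm)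
    (v : Fin ν → ℤ) (hv : ∀ i, 0 < v i)
    (hker : LinearMap.ker M.mulVecLin = Submodule.span ℤ {v}) :
    ∃ β : PhiM M →+ PhiM M →+ QZ,
      (∀ (x y : PhiM M) (T T' : Fin ν → ℤ),
        (x : MatCoker M) = Submodule.Quotient.mk T →
        (y : MatCoker M) = Submodule.Quotient.mk T' →
        ∀ (n n' : ℤ) (S S' : Fin ν → ℤ), n ≠ 0 → n' ≠ 0 →
          M.mulVec S = n • T → M.mulVec S' = n' • T' →
          β x y = QuotientAddGroup.mk
            (((S ⬝ᵥ M.mulVec S' : ℤ) : ℚ) / ((n : ℚ) * (n' : ℚ)))) ∧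
      Function.Bijective β :=
  stmt6_general ν M hM v hker
end

section
/- Let R be a complete discrete valuation ring with algebraically closed residue field and fraction field K, with normalized valuation v, and let F be a finite extension of K with valuation ring O_F (the valuation ring of the unique extension of v). Then for any nonzero f ∈ F: if f ∈ O_F, then [F:K]·v(f) = length_{O_F}(O_F/(f)); and if f ∉ O_F, then [F:K]·v(f) = −length_{O_F}(O_F/(f^{-1})), where v also denotes the unique extension of v to F (normalized so that v has value group ℤ on K). -/
/-!
Let `ϖ` be a uniformizer of `O_F` and write `π = u ϖ ^ e`. As the residue field of `R` is
algebraically closed, it is also the residue field of `O_F`, so every element of `O_F` has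
`ϖ`-adic digits in `R`; reading them in blocks of `e` and using the completeness of `R`, the
powers `1, ϖ, …, ϖ ^ (e - 1)` span `O_F` over `R`. They are independent because the valuations
`e · v(bᵢ) + i` of the terms `bᵢ ϖ ^ i` are pairwise distinct. Hence they form a `K`-basis of
`F`, so `[F : K] = e` and `w ϖ = 1 / e`; for `g = v ϖ ^ m` both `[F : K] · w g` and the length
of `O_F / (g)` are then equal to `m`.
-/

/-- The length of a module, as the Krull dimension of its lattice of
submodules. -/
noncomputable def moduleLength (R M : Type*) [Ring R] [AddCommGroup M]
    [Module R M] : WithBot ℕ∞ :=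
  Order.krullDim (Submodule R M)

open IsLocalRing Submodule

instance IsPrecomplete.pi {R : Type*} [CommRing R] (I : Ideal R) (ι : Type*) [Finite ι]
    (M : Type*) [AddCommGroup M] [Module R M] [IsPrecomplete I M] :
    IsPrecomplete I (ι → M) := by
  have mem_iff : ∀ (n : ℕ) (x : ι → M),
      x ∈ (I ^ n • ⊤ : Submodule R (ι → M)) ↔ ∀ i, x i ∈ (I ^ n • ⊤ : Submodule R M) := by
    refine fun n x ↦ ⟨fun hx i ↦ smul_top_le_comap_smul_top (I ^ n) (LinearMap.proj i) hx,
      fun hx ↦ ?_⟩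
    have := Fintype.ofFinite ι
    classical
    rw [← Finset.univ_sum_single x]
    exact sum_mem fun i _ ↦ smul_top_le_comap_smul_top (I ^ n) (LinearMap.single R _ i) (hx i)
  refine ⟨fun f hf ↦ ?_⟩
  choose L hL using fun i ↦ IsPrecomplete.prec ‹_› (f := fun n ↦ f n i) fun hmn ↦
    SModEq.sub_mem.2 ((mem_iff _ _).1 (SModEq.sub_mem.1 (hf hmn)) i)
  exact ⟨L, fun n ↦ SModEq.sub_mem.2 <| (mem_iff n _).2 fun i ↦ SModEq.sub_mem.1 (hL i n)⟩

theorem moduleLength_quotient_span_unit_mul_pow {S : Type*} [CommRing S] [IsDomain S]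
    [IsDiscreteValuationRing S] {ϖ : S} (hϖ : Irreducible ϖ) (v : Sˣ) (m : ℕ) :
    moduleLength S (S ⧸ Ideal.span {↑v * ϖ ^ m}) = m := by
  rw [moduleLength, ← Module.coe_length, Ideal.span_singleton_mul_left_unit v.isUnit,
    ← Ideal.span_singleton_pow, ← hϖ.maximalIdeal_eq,
    IsDiscreteValuationRing.length_quotient_pow_maximalIdeal]
  rfl

theorem residueField_algebraMap_surjective_of_isAlgClosed {R S : Type*} [CommRing R]
    [IsLocalRing R] [CommRing S] [IsLocalRing S] [Algebra R S] [Algebra.IsIntegral R S]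
    [IsLocalHom (algebraMap R S)] [IsAlgClosed (ResidueField R)] :
    Function.Surjective (algebraMap (ResidueField R) (ResidueField S)) :=
  have : Algebra.IsIntegral (ResidueField R) (ResidueField S) :=
    inferInstanceAs (Algebra.IsIntegral (R ⧸ maximalIdeal R) (S ⧸ maximalIdeal S))
  IsAlgClosed.algebraMap_bijective_of_isIntegral.2

section

variable {R S : Type*} [CommRing R] [IsDomain R] [IsDiscreteValuationRing R]
  [CommRing S] [IsDomain S] [Algebra R S]
  {π : R} {ϖ : S} {u : Sˣ} {e : ℕ}

theorem dvd_of_pow_dvd_sum_mul_pow (hπ : Irreducible π) (hϖ : Irreducible ϖ)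
    (hpe : algebraMap R S π = u * ϖ ^ e) {n : ℕ} (hn : n ≤ e) (b : Fin n → R)
    (hdvd : ϖ ^ n ∣ ∑ i, algebraMap R S (b i) * ϖ ^ (i : ℕ)) (i : Fin n) : π ∣ b i := by
  induction n with
  | zero => exact i.elim0
  | succ n ih =>
    have hsum : ∑ i, algebraMap R S (b i) * ϖ ^ (i : ℕ) =
        algebraMap R S (b 0) + ϖ * ∑ i : Fin n, algebraMap R S (b i.succ) * ϖ ^ (i : ℕ) := by
      rw [Fin.sum_univ_succ, Finset.mul_sum, Fin.val_zero, pow_zero, mul_one]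
      exact congrArg _ (Finset.sum_congr rfl fun i _ ↦ by rw [Fin.val_succ, pow_succ']; ring)
    rw [hsum] at hdvd
    have hb0 : π ∣ b 0 := by
      by_contra hb0
      have hunit : IsUnit (b 0) := by
        rwa [← notMem_maximalIdeal, hπ.maximalIdeal_eq, Ideal.mem_span_singleton]
      have : ϖ ∣ algebraMap R S (b 0) :=
        (dvd_add_left (dvd_mul_right ϖ _)).1 ((dvd_pow_self ϖ n.succ_ne_zero).trans hdvd)
      exact hϖ.not_isUnit (isUnit_of_dvd_unit this (hunit.map _))
    have hb0' : ϖ ^ (n + 1) ∣ algebraMap R S (b 0) := by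
      obtain ⟨c, hc⟩ := hb0
      rw [hc, map_mul, hpe]
      exact dvd_mul_of_dvd_left (dvd_mul_of_dvd_right (pow_dvd_pow ϖ hn) _) _
    have htail := (dvd_add_right hb0').1 hdvd
    rw [pow_succ', mul_dvd_mul_iff_left hϖ.ne_zero] at htail
    cases i using Fin.cases with
    | zero => exact hb0
    | succ i => exact ih (by omega) _ htail i

theorem pow_dvd_of_dvd_sum_mul_pow (hπ : Irreducible π) (hϖ : Irreducible ϖ)
    (hpe : algebraMap R S π = u * ϖ ^ e) (N : ℕ) (b : Fin e → R)
    (hb : algebraMap R S π ^ N ∣ ∑ i, algebraMap R S (b i) * ϖ ^ (i : ℕ)) (i : Fin e) :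
    π ^ N ∣ b i := by
  induction N generalizing b with
  | zero => simp
  | succ N ih =>
    have hϖe : ϖ ^ e ∣ ∑ i, algebraMap R S (b i) * ϖ ^ (i : ℕ) :=
      (Dvd.intro_left _ hpe.symm).trans ((dvd_pow_self _ N.succ_ne_zero).trans hb)
    choose c hc using dvd_of_pow_dvd_sum_mul_pow hπ hϖ hpe le_rfl b hϖe
    have hsum : ∑ i, algebraMap R S (b i) * ϖ ^ (i : ℕ) =
        algebraMap R S π * ∑ i, algebraMap R S (c i) * ϖ ^ (i : ℕ) := by
      simp only [hc, map_mul, Finset.mul_sum, mul_assoc]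
    have hπ0 : algebraMap R S π ≠ 0 := by
      rw [hpe]; exact mul_ne_zero u.ne_zero (pow_ne_zero _ hϖ.ne_zero)
    rw [hsum, pow_succ', mul_dvd_mul_iff_left hπ0] at hb
    rw [hc, pow_succ']
    exact mul_dvd_mul_left π (ih c hb)

theorem linearIndependent_pow_of_eq_unit_mul_pow (hπ : Irreducible π) (hϖ : Irreducible ϖ)
    (hpe : algebraMap R S π = u * ϖ ^ e) :
    LinearIndependent R fun i : Fin e ↦ ϖ ^ (i : ℕ) := by
  rw [Fintype.linearIndependent_iff]
  intro b hb i
  simp only [Algebra.smul_def] at hb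
  by_contra hbi
  refine FiniteMultiplicity.not_iff_forall.2 (fun N ↦ ?_)
    (FiniteMultiplicity.of_not_isUnit hπ.not_isUnit hbi)
  exact pow_dvd_of_dvd_sum_mul_pow hπ hϖ hpe N b (by rw [hb]; exact dvd_zero _) i

variable [IsDiscreteValuationRing S]

theorem exists_pow_dvd_sub_sum_mul_pow [IsLocalHom (algebraMap R S)] (hϖ : Irreducible ϖ)
    (hres : Function.Surjective (algebraMap (ResidueField R) (ResidueField S))) (n : ℕ)
    (x : S) : ∃ b : Fin n → R, ϖ ^ n ∣ x - ∑ i, algebraMap R S (b i) * ϖ ^ (i : ℕ) := by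
  induction n generalizing x with
  | zero => exact ⟨Fin.elim0, by simp⟩
  | succ n ih =>
    obtain ⟨a, ha⟩ : ∃ a : R, ϖ ∣ x - algebraMap R S a := by
      obtain ⟨a, ha⟩ := hres (residue S x)
      obtain ⟨a, rfl⟩ := residue_surjective a
      rw [ResidueField.algebraMap_residue, eq_comm, ← sub_eq_zero, ← map_sub, residue_eq_zero_iff,
        hϖ.maximalIdeal_eq, Ideal.mem_span_singleton] at ha
      exact ⟨a, ha⟩
    obtain ⟨y, hy⟩ := ha
    obtain ⟨c, hc⟩ := ih y
    refine ⟨Fin.cons a c, ?_⟩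
    have hsum : x - ∑ i, algebraMap R S ((Fin.cons a c : Fin (n + 1) → R) i) * ϖ ^ (i : ℕ) =
        ϖ * (y - ∑ i : Fin n, algebraMap R S (c i) * ϖ ^ (i : ℕ)) := by
      rw [Fin.sum_univ_succ, mul_sub, ← hy, Fin.cons_zero, Fin.val_zero, pow_zero, mul_one,
        Finset.mul_sum, sub_add_eq_sub_sub]
      exact congrArg _ (Finset.sum_congr rfl fun i _ ↦ by
        rw [Fin.cons_succ, Fin.val_succ, pow_succ']; ring)
    rw [hsum, pow_succ']
    exact mul_dvd_mul_left ϖ hc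

theorem span_range_pow_eq_top_of_eq_unit_mul_pow [IsPrecomplete (maximalIdeal R) R]
    [IsLocalHom (algebraMap R S)]
    (hπ : Irreducible π) (hϖ : Irreducible ϖ) (hpe : algebraMap R S π = u * ϖ ^ e)
    (hres : Function.Surjective (algebraMap (ResidueField R) (ResidueField S))) :
    span R (Set.range fun i : Fin e ↦ ϖ ^ (i : ℕ)) = ⊤ := by
  have : IsHausdorff (maximalIdeal R) S := .of_map (map_maximalIdeal_le (algebraMap R S))
  rw [← Fintype.range_linearCombination, LinearMap.range_eq_top]
  refine surjective_of_mkQ_comp_surjective (I := maximalIdeal R) fun y ↦ ?_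
  obtain ⟨x, rfl⟩ := mkQ_surjective _ y
  obtain ⟨b, z, hz⟩ := exists_pow_dvd_sub_sum_mul_pow hϖ hres e x
  refine ⟨b, (Submodule.Quotient.eq _).2 ?_⟩
  have : x - Fintype.linearCombination R (fun i : Fin e ↦ ϖ ^ (i : ℕ)) b = π • (↑u⁻¹ * z) := by
    rw [Fintype.linearCombination_apply]
    simp only [Algebra.smul_def] at hz ⊢
    rw [hz, hpe, mul_comm (u : S), mul_assoc, Units.mul_inv_cancel_left]
  rw [← neg_mem_iff, neg_sub, this]
  exact smul_mem_smul (hπ.maximalIdeal_eq ▸ Ideal.mem_span_singleton_self π) mem_top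

end

theorem IsIntegralClosure.finrank_eq_card_of_basis (A K L C : Type*) [CommRing A] [IsDomain A]
    [Field K] [Algebra A K] [IsFractionRing A K] [Field L] [CommRing C] [Algebra K L]
    [FiniteDimensional K L] [Algebra A L] [IsScalarTower A K L] [Algebra C L]
    [IsIntegralClosure C A L] [Algebra A C] [IsScalarTower A C L] {ι : Type*} [Fintype ι]
    (b : Module.Basis ι A C) :
    Module.finrank K L = Fintype.card ι :=
  have := IsIntegralClosure.isLocalization A K L C
  Module.finrank_eq_card_basis (b.localizationLocalization K (nonZeroDivisors A) L)

section

variable {F : Type*} [Field F] {w : F → ℚ}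

theorem map_one_eq_zero_of_map_mul (hw_mul : ∀ x y : F, x ≠ 0 → y ≠ 0 → w (x * y) = w x + w y) :
    w 1 = 0 := by
  have := hw_mul 1 1 one_ne_zero one_ne_zero
  rw [mul_one] at this
  linarith

theorem map_inv_eq_neg_of_map_mul (hw_mul : ∀ x y : F, x ≠ 0 → y ≠ 0 → w (x * y) = w x + w y)
    {x : F} (hx : x ≠ 0) : w x⁻¹ = -w x := by
  have := hw_mul x x⁻¹ hx (inv_ne_zero hx)
  rw [mul_inv_cancel₀ hx, map_one_eq_zero_of_map_mul hw_mul] at this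
  linarith

theorem map_pow_eq_mul_of_map_mul (hw_mul : ∀ x y : F, x ≠ 0 → y ≠ 0 → w (x * y) = w x + w y)
    {x : F} (hx : x ≠ 0) (n : ℕ) : w (x ^ n) = n * w x := by
  induction n with
  | zero => simp [map_one_eq_zero_of_map_mul hw_mul]
  | succ n ih =>
    rw [pow_succ, hw_mul _ _ (pow_ne_zero n hx) hx, ih]
    push_cast
    ring

theorem map_algebraMap_unit_mul_pow_of_map_mul {A : Type*} [CommRing A] [Algebra A F]
    (hw_mul : ∀ x y : F, x ≠ 0 → y ≠ 0 → w (x * y) = w x + w y)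
    (hw_nonneg : ∀ a : A, algebraMap A F a ≠ 0 → 0 ≤ w (algebraMap A F a))
    (v : Aˣ) {ϖ : A} (hϖ : algebraMap A F ϖ ≠ 0) (m : ℕ) :
    w (algebraMap A F (v * ϖ ^ m)) = m * w (algebraMap A F ϖ) := by
  have hv : algebraMap A F v ≠ 0 := (v.map (algebraMap A F : A →* F)).ne_zero
  have hv_inv := map_units_inv (algebraMap A F) v
  have hwv : w (algebraMap A F v) = 0 := by
    have := hw_nonneg _ (hv_inv ▸ inv_ne_zero hv)
    rw [hv_inv, map_inv_eq_neg_of_map_mul hw_mul hv] at this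
    linarith [hw_nonneg _ hv]
  rw [map_mul, map_pow, hw_mul _ _ hv (pow_ne_zero _ hϖ), hwv, zero_add,
    map_pow_eq_mul_of_map_mul hw_mul hϖ]

end

/-- `R` a complete DVR with algebraically closed residue field,
fraction field `K` and normalized valuation `v` (value group `ℤ`); `F/K` a
finite extension, `O_F` the valuation ring of the unique extension `w` of `v`
to `F` (the integral closure of `R` in `F`, a DVR with fraction field `F`).
The extension `w` is encoded as a `ℚ`-valued function on `F`, multiplicative on
nonzero elements, with `w(π) = 1` for `π` a uniformizer of `R` (so `w` extends
the normalized valuation of `K`) and nonnegative exactly on `O_F`.  Then for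
any nonzero `f ∈ F`: if `f ∈ O_F` then `[F:K]·w(f) = length_{O_F}(O_F/(f))`,
and if `f ∉ O_F` then `[F:K]·w(f) = −length_{O_F}(O_F/(f⁻¹))`. -/
theorem stmt10 (R K F OF : Type*)
    [CommRing R] [IsDomain R] [IsDiscreteValuationRing R]
    [IsAdicComplete (IsLocalRing.maximalIdeal R) R]
    [IsAlgClosed (IsLocalRing.ResidueField R)]
    [Field K] [Algebra R K] [IsFractionRing R K]
    [Field F] [Algebra K F] [FiniteDimensional K F]
    [CommRing OF] [IsDomain OF] [IsDiscreteValuationRing OF]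
    [Algebra OF F] [IsFractionRing OF F]
    [Algebra R OF] [Algebra R F] [IsScalarTower R OF F] [IsScalarTower R K F]
    [IsIntegralClosure OF R F]
    (w : F → ℚ)
    (hw_mul : ∀ x y : F, x ≠ 0 → y ≠ 0 → w (x * y) = w x + w y)
    (π : R) (hπ : Irreducible π) (hw_unif : w (algebraMap R F π) = 1)
    (hw_ring : ∀ x : F, x ≠ 0 → (0 ≤ w x ↔ x ∈ Set.range (algebraMap OF F)))
    (f : F) (hf : f ≠ 0) :
    (∀ g : OF, algebraMap OF F g = f →
      ∃ m : ℕ, moduleLength OF (OF ⧸ Ideal.span {g}) = (m : ℕ∞) ∧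
        (Module.finrank K F : ℚ) * w f = (m : ℚ)) ∧
    (f ∉ Set.range (algebraMap OF F) → ∀ g : OF, algebraMap OF F g = f⁻¹ →
      ∃ m : ℕ, moduleLength OF (OF ⧸ Ideal.span {g}) = (m : ℕ∞) ∧
        (Module.finrank K F : ℚ) * w f = -(m : ℚ)) := by
  have : Module.IsTorsionFree R F := .trans_faithfulSMul R K F
  have : FaithfulSMul R OF := .tower_bot R OF F
  have : Algebra.IsIntegral R OF := IsIntegralClosure.isIntegral_algebra R F
  obtain ⟨ϖ, hϖ⟩ := IsDiscreteValuationRing.exists_irreducible OF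
  obtain ⟨e, u, hpe⟩ := IsDiscreteValuationRing.eq_unit_mul_pow_irreducible
    ((map_ne_zero_iff _ (FaithfulSMul.algebraMap_injective R OF)).2 hπ.ne_zero) hϖ
  have hfinrank : Module.finrank K F = e := by
    have hres := residueField_algebraMap_surjective_of_isAlgClosed (R := R) (S := OF)
    simpa using IsIntegralClosure.finrank_eq_card_of_basis R K F OF <| Module.Basis.mk
      (linearIndependent_pow_of_eq_unit_mul_pow hπ hϖ hpe)
      (span_range_pow_eq_top_of_eq_unit_mul_pow hπ hϖ hpe hres).ge
  have hw_unit_mul_pow := map_algebraMap_unit_mul_pow_of_map_mul hw_mul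
    (fun a ha ↦ (hw_ring _ ha).2 ⟨a, rfl⟩)
    (hϖ := (map_ne_zero_iff _ (IsFractionRing.injective OF F)).2 hϖ.ne_zero)
  have hwϖ : (e : ℚ) * w (algebraMap OF F ϖ) = 1 := by
    rw [← hw_unif, IsScalarTower.algebraMap_apply R OF F, hpe, hw_unit_mul_pow]
  have hval (g : OF) (hg : g ≠ 0) : ∃ m : ℕ, moduleLength OF (OF ⧸ Ideal.span {g}) = (m : ℕ∞) ∧
      (Module.finrank K F : ℚ) * w (algebraMap OF F g) = m := by
    obtain ⟨m, v, rfl⟩ := IsDiscreteValuationRing.eq_unit_mul_pow_irreducible hg hϖ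
    refine ⟨m, moduleLength_quotient_span_unit_mul_pow hϖ v m, ?_⟩
    rw [hfinrank, hw_unit_mul_pow, mul_left_comm, hwϖ, mul_one]
  refine ⟨fun g hg ↦ hg ▸ hval g (ne_zero_of_map (hg ▸ hf)), fun _ g hg ↦ ?_⟩
  obtain ⟨m, hm, hwm⟩ := hval g (ne_zero_of_map (hg ▸ inv_ne_zero hf))
  rw [hg, map_inv_eq_neg_of_map_mul hw_mul hf] at hwm
  exact ⟨m, hm, by linarith⟩
end
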